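/- Let S be a Tarski monoid and let e and f be non-zero idempotents with e ⪯ f. Then there exist elements x₁, ..., xₘ ∈ S such that r(xᵢ) ≤ f for all i and e = d(x₁) ∨ ... ∨ d(xₘ), where the idempotents d(x₁), ..., d(xₘ) are pairwise orthogonal. -/

import Mathlib

universe u

/-- An inverse monoid with zero: every element `a` has a unique generalized
inverse `a⁻¹`, and `0` is an absorbing element. -/
class InverseMonoidWithZero (S : Type u) extends Monoid S, Zero S, Inv S where
  zero_mul' : ∀ a : S, 0 * a = 0
  mul_zero' : ∀ a : S, a * 0 = 0
  mul_inv_mul : ∀ a : S, a * a⁻¹ * a = a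
  inv_mul_inv : ∀ a : S, a⁻¹ * a * a⁻¹ = a⁻¹
  inv_unique : ∀ a b : S, a * b * a = a → b * a * b = b → b = a⁻¹

section BasicDefs

variable {S : Type u}

/-- The natural partial order: `a ≤ b` iff `a = e * b` for some idempotent `e`. -/
def nle [InverseMonoidWithZero S] (a b : S) : Prop :=
  ∃ e : S, e * e = e ∧ a = e * b

/-- `a` and `b` are compatible if `a * b⁻¹` and `a⁻¹ * b` are idempotents. -/
def Compat [InverseMonoidWithZero S] (a b : S) : Prop :=
  (a * b⁻¹) * (a * b⁻¹) = a * b⁻¹ ∧ (a⁻¹ * b) * (a⁻¹ * b) = a⁻¹ * b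

/-- `a` and `b` are orthogonal if `a * b⁻¹ = 0` and `a⁻¹ * b = 0`. -/
def Orth [InverseMonoidWithZero S] (a b : S) : Prop :=
  a * b⁻¹ = 0 ∧ a⁻¹ * b = 0

end BasicDefs

/-- A distributive inverse monoid: every compatible pair has a join (for the
natural partial order), recorded by `sup`, and multiplication distributes over
these binary joins. -/
class DistributiveInverseMonoid (S : Type u) extends InverseMonoidWithZero S where
  sup : S → S → S
  le_sup_left : ∀ a b : S, Compat a b → nle a (sup a b)
  le_sup_right : ∀ a b : S, Compat a b → nle b (sup a b)
  sup_le : ∀ a b c : S, Compat a b → nle a c → nle b c → nle (sup a b) c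
  mul_sup : ∀ a b c : S, Compat a b → c * sup a b = sup (c * a) (c * b)
  sup_mul : ∀ a b c : S, Compat a b → sup a b * c = sup (a * c) (b * c)

/-- A Boolean inverse monoid: a distributive inverse monoid whose idempotents
form a Boolean algebra under the natural partial order; `compl` records the
complementation on idempotents. -/
class BooleanInverseMonoid (S : Type u) extends DistributiveInverseMonoid S where
  compl : S → S
  compl_idem : ∀ e : S, e * e = e → compl e * compl e = compl e
  mul_compl : ∀ e : S, e * e = e → e * compl e = 0
  sup_compl : ∀ e : S, e * e = e → sup e (compl e) = 1

/-- A Boolean inverse ∧-monoid: a Boolean inverse monoid in which every pair of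
elements has a meet with respect to the natural partial order. -/
class BooleanInverseMeetMonoid (S : Type u) extends BooleanInverseMonoid S where
  inf : S → S → S
  inf_le_left : ∀ a b : S, nle (inf a b) a
  inf_le_right : ∀ a b : S, nle (inf a b) b
  le_inf : ∀ a b c : S, nle c a → nle c b → nle c (inf a b)

section MoreDefs

variable {S : Type u}

/-- The join of a compatible pair. -/
def bsup [DistributiveInverseMonoid S] (a b : S) : S := DistributiveInverseMonoid.sup a b

/-- Complementation in the Boolean algebra of idempotents. -/
def bcompl [BooleanInverseMonoid S] (e : S) : S := BooleanInverseMonoid.compl e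

/-- The binary meet. -/
def binf [BooleanInverseMeetMonoid S] (a b : S) : S := BooleanInverseMeetMonoid.inf a b

/-- The fixed-point operator `φ(s) = s ∧ 1`. -/
def phi [BooleanInverseMeetMonoid S] (s : S) : S := binf s 1

/-- The support operator `σ(s) = \overline{φ(s)} ⋅ s⁻¹ s`. -/
def sigma [BooleanInverseMeetMonoid S] (s : S) : S := bcompl (phi s) * (s⁻¹ * s)

/-- An infinitesimal is a non-zero element that squares to zero. -/
def Infinitesimal [InverseMonoidWithZero S] (a : S) : Prop := a ≠ 0 ∧ a * a = 0

/-- A (two-sided) ideal. -/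
def IsMIdeal [InverseMonoidWithZero S] (I : Set S) : Prop :=
  I.Nonempty ∧ ∀ a ∈ I, ∀ s : S, s * a ∈ I ∧ a * s ∈ I

/-- A ∨-ideal: an ideal closed under joins of compatible pairs. -/
def IsVIdeal [DistributiveInverseMonoid S] (I : Set S) : Prop :=
  IsMIdeal I ∧ ∀ a ∈ I, ∀ b ∈ I, Compat a b → bsup a b ∈ I

end MoreDefs

/-- 0-simplifying: the only ∨-ideals are `{0}` and `S`. -/
def ZeroSimplifying (S : Type u) [DistributiveInverseMonoid S] : Prop :=
  ∀ I : Set S, IsVIdeal I → I = {0} ∨ I = Set.univ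

/-- 0-simple: non-trivial and the only ideals are `{0}` and `S`. -/
def ZeroSimple (S : Type u) [InverseMonoidWithZero S] : Prop :=
  (∃ s : S, s ≠ 0) ∧ ∀ I : Set S, IsMIdeal I → I = {0} ∨ I = Set.univ

/-- Fundamental: every element commuting with all idempotents is an idempotent. -/
def Fundamental (S : Type u) [InverseMonoidWithZero S] : Prop :=
  ∀ a : S, (∀ e : S, e * e = e → a * e = e * a) → a * a = a

/-- The Boolean algebra of idempotents is atomless. -/
def IdemAtomless (S : Type u) [InverseMonoidWithZero S] : Prop :=
  ∀ e : S, e * e = e → e ≠ 0 → ∃ f : S, f * f = f ∧ f ≠ 0 ∧ nle f e ∧ f ≠ e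

section Filters

variable {S : Type u}

/-- A filter in a Boolean inverse ∧-monoid: a nonempty subset closed under
binary meets and upward closed in the natural partial order. -/
def IsMFilter [BooleanInverseMeetMonoid S] (A : Set S) : Prop :=
  A.Nonempty ∧ (∀ a ∈ A, ∀ b ∈ A, binf a b ∈ A) ∧ ∀ a ∈ A, ∀ b : S, nle a b → b ∈ A

/-- An ultrafilter: a maximal proper filter. -/
def IsMUltrafilter [BooleanInverseMeetMonoid S] (A : Set S) : Prop :=
  IsMFilter A ∧ (0 : S) ∉ A ∧ ∀ B : Set S, IsMFilter B → (0 : S) ∉ B → A ⊆ B → A = B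

/-- A filter of the Boolean algebra of idempotents (meet of idempotents is
their product). -/
def IsIdemFilter [InverseMonoidWithZero S] (F : Set S) : Prop :=
  F.Nonempty ∧ (∀ e ∈ F, e * e = e) ∧ (∀ e ∈ F, ∀ f ∈ F, e * f ∈ F) ∧
    ∀ e ∈ F, ∀ f : S, f * f = f → nle e f → f ∈ F

/-- An ultrafilter of the Boolean algebra of idempotents. -/
def IsIdemUltrafilter [InverseMonoidWithZero S] (F : Set S) : Prop :=
  IsIdemFilter F ∧ (0 : S) ∉ F ∧
    ∀ G : Set S, IsIdemFilter G → (0 : S) ∉ G → F ⊆ G → F = G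

end Filters

section PencilDefs

variable {S : Type u}

/-- `Preceq e f`: there is a pencil from `e` to `f`, i.e. finitely many
elements `x₁, …, xₘ` with `r(xᵢ) ≤ f` for all `i` and `e = ⋁ d(xᵢ)`
(a least upper bound for the natural partial order). -/
def Preceq [DistributiveInverseMonoid S] (e f : S) : Prop :=
  ∃ l : List S, l ≠ [] ∧ (∀ x ∈ l, nle (x * x⁻¹) f) ∧
    (∀ x ∈ l, nle (x⁻¹ * x) e) ∧ ∀ c : S, (∀ x ∈ l, nle (x⁻¹ * x) c) → nle e c

/-- Piecewise factorizable: every element is a finite join of elements each of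
which lies beneath a unit. -/
def PiecewiseFactorizable (S : Type u) [DistributiveInverseMonoid S] : Prop :=
  ∀ s : S, ∃ l : List S, l ≠ [] ∧ (∀ x ∈ l, ∃ g : S, IsUnit g ∧ nle x g) ∧
    (∀ x ∈ l, nle x s) ∧ ∀ c : S, (∀ x ∈ l, nle x c) → nle s c

/-- A properly infinite idempotent. -/
def ProperlyInfinite [DistributiveInverseMonoid S] (e : S) : Prop :=
  ∃ x y : S, x⁻¹ * x = e ∧ y⁻¹ * y = e ∧ Orth (x * x⁻¹) (y * y⁻¹) ∧
    nle (bsup (x * x⁻¹) (y * y⁻¹)) e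

end PencilDefs

/-- Purely infinite: every non-zero idempotent is properly infinite. -/
def PurelyInfinite (S : Type u) [DistributiveInverseMonoid S] : Prop :=
  ∀ e : S, e * e = e → e ≠ 0 → ProperlyInfinite e

/-!
Restrict each member `xᵢ` of a pencil from `e` to `f` to the complement of
`d(x₁) ∨ ⋯ ∨ d(xᵢ₋₁)`. The new domains `d(xᵢ) ∖ (d(x₁) ∨ ⋯ ∨ d(xᵢ₋₁))` are pairwise
orthogonal and have the same join as the old ones, while restriction to an idempotent
only shrinks domains and ranges.
-/

namespace InverseMonoidWithZero

variable {S : Type u} [InverseMonoidWithZero S]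

protected theorem inv_inv (a : S) : a⁻¹⁻¹ = a :=
  (inv_unique a⁻¹ a (inv_mul_inv a) (mul_inv_mul a)).symm

theorem inv_eq_self_of_isIdempotentElem {e : S} (he : IsIdempotentElem e) : e⁻¹ = e :=
  (inv_unique e e (by rw [he.eq, he.eq]) (by rw [he.eq, he.eq])).symm

theorem isIdempotentElem_inv_mul_self (x : S) : IsIdempotentElem (x⁻¹ * x) := by
  rw [IsIdempotentElem, mul_assoc, ← mul_assoc x, mul_inv_mul]

theorem isIdempotentElem_mul_self_inv (x : S) : IsIdempotentElem (x * x⁻¹) := by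
  rw [IsIdempotentElem, mul_assoc, ← mul_assoc x⁻¹, inv_mul_inv]

/-- With `y = (ef)⁻¹`, the element `f y e` is also an inverse of `ef`, hence equal to `y`;
this makes `y`, and therefore `ef = y⁻¹`, idempotent. -/
theorem isIdempotentElem_mul {e f : S} (he : IsIdempotentElem e) (hf : IsIdempotentElem f) :
    IsIdempotentElem (e * f) := by
  have hfye : f * (e * f)⁻¹ * e = (e * f)⁻¹ := by
    refine inv_unique _ _ ?_ ?_
    · have h := mul_inv_mul (e * f)
      simp only [mul_assoc, he.mul_self_mul, hf.mul_self_mul] at h ⊢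
      exact h
    · have h := congrArg (fun z => f * z * e) (inv_mul_inv (e * f))
      simp only [mul_assoc, he.mul_self_mul, hf.mul_self_mul] at h ⊢
      exact h
  have hy : IsIdempotentElem (e * f)⁻¹ := by
    calc (e * f)⁻¹ * (e * f)⁻¹ = f * ((e * f)⁻¹ * (e * f) * (e * f)⁻¹) * e := by
          conv_lhs => rw [← hfye]
          simp only [mul_assoc]
      _ = (e * f)⁻¹ := by rw [inv_mul_inv, hfye]
  rw [IsIdempotentElem, ← InverseMonoidWithZero.inv_inv (e * f),
    inv_eq_self_of_isIdempotentElem hy, hy.eq]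

/-- `fe` is an inverse of the idempotent `ef`, and idempotents are their own inverses. -/
theorem commute_of_isIdempotentElem {e f : S} (he : IsIdempotentElem e)
    (hf : IsIdempotentElem f) : Commute e f := by
  have hef := isIdempotentElem_mul he hf
  have hfe := isIdempotentElem_mul hf he
  have h : f * e = (e * f)⁻¹ := by
    refine inv_unique _ _ ?_ ?_
    · have h := hef.eq
      simp only [mul_assoc, he.mul_self_mul, hf.mul_self_mul] at h ⊢
      exact h
    · have h := hfe.eq
      simp only [mul_assoc, he.mul_self_mul, hf.mul_self_mul] at h ⊢
      exact h
  rw [Commute, SemiconjBy, h, inv_eq_self_of_isIdempotentElem hef]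

theorem mul_idem_inv (x : S) {g : S} (hg : IsIdempotentElem g) : (x * g)⁻¹ = g * x⁻¹ := by
  have hcomm := commute_of_isIdempotentElem hg (isIdempotentElem_inv_mul_self x)
  refine (inv_unique _ _ ?_ ?_).symm
  · calc x * g * (g * x⁻¹) * (x * g) = x * ((g * g) * (x⁻¹ * x)) * g := by
          simp only [mul_assoc]
      _ = x * x⁻¹ * x * g := by rw [hg.eq, hcomm.eq]; simp only [mul_assoc, hg.eq]
      _ = x * g := by rw [mul_inv_mul]
  · calc g * x⁻¹ * (x * g) * (g * x⁻¹) = g * ((x⁻¹ * x) * (g * g)) * x⁻¹ := by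
          simp only [mul_assoc]
      _ = g * (x⁻¹ * x * x⁻¹) := by
          rw [hg.eq, ← hcomm.eq]; simp only [mul_assoc, hg.mul_self_mul]
      _ = g * x⁻¹ := by rw [inv_mul_inv]

theorem mul_idem_inv_mul_self (x : S) {g : S} (hg : IsIdempotentElem g) :
    (x * g)⁻¹ * (x * g) = x⁻¹ * x * g := by
  have hcomm := commute_of_isIdempotentElem hg (isIdempotentElem_inv_mul_self x)
  calc (x * g)⁻¹ * (x * g) = g * (x⁻¹ * x) * g := by
        rw [mul_idem_inv x hg]; simp only [mul_assoc]
    _ = x⁻¹ * x * g := by rw [hcomm.eq, mul_assoc, hg.eq]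

theorem isIdempotentElem_zero : IsIdempotentElem (0 : S) := zero_mul' 0

theorem zero_nle (a : S) : nle 0 a := ⟨0, isIdempotentElem_zero, (zero_mul' a).symm⟩

theorem nle_trans {a b c : S} (hab : nle a b) (hbc : nle b c) : nle a c := by
  obtain ⟨g, hg, rfl⟩ := hab
  obtain ⟨k, hk, rfl⟩ := hbc
  exact ⟨g * k, isIdempotentElem_mul hg hk, (mul_assoc g k c).symm⟩

theorem nle_one_of_isIdempotentElem {e : S} (he : IsIdempotentElem e) : nle e 1 :=
  ⟨e, he, (mul_one e).symm⟩

theorem isIdempotentElem_of_nle_one {s : S} (h : nle s 1) : IsIdempotentElem s := by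
  obtain ⟨g, hg, rfl⟩ := h
  rwa [mul_one]

theorem mul_idem_nle_self {e g : S} (he : IsIdempotentElem e) (hg : IsIdempotentElem g) :
    nle (e * g) e :=
  ⟨g, hg, (commute_of_isIdempotentElem he hg).eq⟩

theorem mul_eq_zero_of_nle {u v w : S} (hw : IsIdempotentElem w) (huv : nle u v)
    (hwv : w * v = 0) : w * u = 0 := by
  obtain ⟨g, hg, rfl⟩ := huv
  rw [← mul_assoc, (commute_of_isIdempotentElem hw hg).eq, mul_assoc, hwv, mul_zero']

theorem mul_idem_mul_inv_nle (x : S) {g : S} (hg : IsIdempotentElem g) :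
    nle (x * g * (x * g)⁻¹) (x * x⁻¹) := by
  refine ⟨x * g * (x * g)⁻¹, isIdempotentElem_mul_self_inv _, ?_⟩
  rw [mul_idem_inv x hg]
  simp only [mul_assoc]
  rw [← mul_assoc x⁻¹ x x⁻¹, inv_mul_inv]

theorem mul_idem_inv_mul_nle (x : S) {g : S} (hg : IsIdempotentElem g) :
    nle ((x * g)⁻¹ * (x * g)) (x⁻¹ * x) := by
  rw [mul_idem_inv_mul_self x hg]
  exact mul_idem_nle_self (isIdempotentElem_inv_mul_self x) hg

theorem compat_of_isIdempotentElem {e f : S} (he : IsIdempotentElem e)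
    (hf : IsIdempotentElem f) : Compat e f := by
  rw [Compat, inv_eq_self_of_isIdempotentElem he, inv_eq_self_of_isIdempotentElem hf]
  exact ⟨isIdempotentElem_mul he hf, isIdempotentElem_mul he hf⟩

end InverseMonoidWithZero

namespace DistributiveInverseMonoid

open InverseMonoidWithZero

variable {S : Type u} [DistributiveInverseMonoid S] {e f : S}

theorem nle_bsup_left (he : IsIdempotentElem e) (hf : IsIdempotentElem f) : nle e (bsup e f) :=
  DistributiveInverseMonoid.le_sup_left e f (compat_of_isIdempotentElem he hf)

theorem nle_bsup_right (he : IsIdempotentElem e) (hf : IsIdempotentElem f) :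
    nle f (bsup e f) :=
  DistributiveInverseMonoid.le_sup_right e f (compat_of_isIdempotentElem he hf)

theorem bsup_nle {c : S} (he : IsIdempotentElem e) (hf : IsIdempotentElem f) (hec : nle e c)
    (hfc : nle f c) : nle (bsup e f) c :=
  DistributiveInverseMonoid.sup_le e f c (compat_of_isIdempotentElem he hf) hec hfc

theorem isIdempotentElem_bsup (he : IsIdempotentElem e) (hf : IsIdempotentElem f) :
    IsIdempotentElem (bsup e f) :=
  isIdempotentElem_of_nle_one
    (bsup_nle he hf (nle_one_of_isIdempotentElem he) (nle_one_of_isIdempotentElem hf))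

end DistributiveInverseMonoid

namespace BooleanInverseMonoid

open InverseMonoidWithZero DistributiveInverseMonoid

variable {S : Type u} [BooleanInverseMonoid S] {a : S}

theorem isIdempotentElem_bcompl (ha : IsIdempotentElem a) : IsIdempotentElem (bcompl a) :=
  compl_idem a ha

theorem mul_bcompl_eq_zero (ha : IsIdempotentElem a) : a * bcompl a = 0 :=
  mul_compl a ha

theorem nle_of_mul_nle_of_mul_bcompl_nle {u c : S} (hu : IsIdempotentElem u)
    (ha : IsIdempotentElem a) (hin : nle (u * a) c) (hout : nle (u * bcompl a) c) : nle u c := by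
  have hsplit : u = bsup (u * a) (u * bcompl a) := by
    conv_lhs => rw [← mul_one u, ← sup_compl a ha]
    exact mul_sup a (bcompl a) u (compat_of_isIdempotentElem ha (isIdempotentElem_bcompl ha))
  rw [hsplit]
  exact bsup_nle (isIdempotentElem_mul hu ha) (isIdempotentElem_mul hu (isIdempotentElem_bcompl ha))
    hin hout

end BooleanInverseMonoid

section Orthogonalize

open InverseMonoidWithZero DistributiveInverseMonoid BooleanInverseMonoid

variable {S : Type u} [BooleanInverseMonoid S]

/-- The accumulator `a` is the join of the domains of the entries already processed;
each entry is restricted to its complement. -/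
def orthogonalize : List S → S → List S
  | [], _ => []
  | x :: t, a => x * bcompl a :: orthogonalize t (bsup a (x⁻¹ * x))

theorem orthogonalize_ne_nil {l : List S} (hl : l ≠ []) (a : S) : orthogonalize l a ≠ [] := by
  cases l with
  | nil => exact absurd rfl hl
  | cons x t => simp [orthogonalize]

theorem isIdempotentElem_bsup_inv_mul_self {a : S} (ha : IsIdempotentElem a) (x : S) :
    IsIdempotentElem (bsup a (x⁻¹ * x)) :=
  isIdempotentElem_bsup ha (isIdempotentElem_inv_mul_self x)

theorem exists_eq_mul_idem_of_mem_orthogonalize {y : S} :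
    ∀ {l : List S} {a : S}, IsIdempotentElem a → y ∈ orthogonalize l a →
      ∃ x ∈ l, ∃ g : S, IsIdempotentElem g ∧ y = x * g
  | [], _, _, hy => by simp [orthogonalize] at hy
  | x :: t, a, ha, hy => by
    rcases List.mem_cons.mp hy with rfl | hy
    · exact ⟨x, List.mem_cons_self, bcompl a, isIdempotentElem_bcompl ha, rfl⟩
    · obtain ⟨z, hz, g, hg, rfl⟩ :=
        exists_eq_mul_idem_of_mem_orthogonalize (isIdempotentElem_bsup_inv_mul_self ha x) hy
      exact ⟨z, List.mem_cons_of_mem x hz, g, hg, rfl⟩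

theorem inv_mul_self_mul_eq_zero_of_mem_orthogonalize {y : S} :
    ∀ {l : List S} {a : S}, IsIdempotentElem a → y ∈ orthogonalize l a → y⁻¹ * y * a = 0
  | [], _, _, hy => by simp [orthogonalize] at hy
  | x :: t, a, ha, hy => by
    rcases List.mem_cons.mp hy with rfl | hy
    · rw [mul_idem_inv_mul_self x (isIdempotentElem_bcompl ha), mul_assoc,
        ← (commute_of_isIdempotentElem ha (isIdempotentElem_bcompl ha)).eq,
        mul_bcompl_eq_zero ha, mul_zero']
    · exact mul_eq_zero_of_nle (isIdempotentElem_inv_mul_self y)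
        (nle_bsup_left ha (isIdempotentElem_inv_mul_self x))
        (inv_mul_self_mul_eq_zero_of_mem_orthogonalize
          (isIdempotentElem_bsup_inv_mul_self ha x) hy)

/-- The domain of the head lies below the new accumulator, which every later domain
annihilates. -/
theorem pairwise_orthogonalize :
    ∀ {l : List S} {a : S}, IsIdempotentElem a →
      ((orthogonalize l a).map fun y => y⁻¹ * y).Pairwise (fun u v => u * v = 0)
  | [], _, _ => by simp [orthogonalize]
  | x :: t, a, ha => by
    have hx := isIdempotentElem_inv_mul_self x
    have ha' := isIdempotentElem_bsup_inv_mul_self ha x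
    have hhead : nle ((x * bcompl a)⁻¹ * (x * bcompl a)) (bsup a (x⁻¹ * x)) :=
      nle_trans (mul_idem_inv_mul_nle x (isIdempotentElem_bcompl ha)) (nle_bsup_right ha hx)
    simp only [orthogonalize, List.map_cons, List.pairwise_cons, List.mem_map]
    refine ⟨?_, pairwise_orthogonalize ha'⟩
    rintro _ ⟨z, hz, rfl⟩
    rw [(commute_of_isIdempotentElem (isIdempotentElem_inv_mul_self _)
      (isIdempotentElem_inv_mul_self z)).eq]
    exact mul_eq_zero_of_nle (isIdempotentElem_inv_mul_self z) hhead
      (inv_mul_self_mul_eq_zero_of_mem_orthogonalize ha' hz)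

/-- `d(x)` is the join of `d(x) a ≤ a` and `d(x) (bcompl a)`, the domain of the head. -/
theorem nle_of_forall_mem_orthogonalize {c : S} :
    ∀ {l : List S} {a : S}, IsIdempotentElem a → nle a c →
      (∀ y ∈ orthogonalize l a, nle (y⁻¹ * y) c) → ∀ x ∈ l, nle (x⁻¹ * x) c
  | [], _, _, _, _ => by simp
  | x :: t, a, ha, hac, hy => by
    have hx := isIdempotentElem_inv_mul_self x
    have hxc : nle (x⁻¹ * x) c := by
      refine nle_of_mul_nle_of_mul_bcompl_nle hx ha (nle_trans ⟨x⁻¹ * x, hx, rfl⟩ hac) ?_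
      rw [← mul_idem_inv_mul_self x (isIdempotentElem_bcompl ha)]
      exact hy _ List.mem_cons_self
    have htail := nle_of_forall_mem_orthogonalize (l := t)
      (isIdempotentElem_bsup_inv_mul_self ha x) (bsup_nle ha hx hac hxc)
      (fun y hy' => hy y (List.mem_cons_of_mem _ hy'))
    rintro z hz
    rcases List.mem_cons.mp hz with rfl | hz
    · exact hxc
    · exact htail z hz

end Orthogonalize

theorem statement16_general (S : Type u) [BooleanInverseMeetMonoid S]
    (e f : S)
    (hpre : Preceq e f) :
    ∃ l : List S, l ≠ [] ∧ (∀ x ∈ l, nle (x * x⁻¹) f) ∧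
      (∀ x ∈ l, nle (x⁻¹ * x) e) ∧
      (∀ c : S, (∀ x ∈ l, nle (x⁻¹ * x) c) → nle e c) ∧
      (l.map fun x => x⁻¹ * x).Pairwise (fun u v => u * v = 0) := by
  have h0 := InverseMonoidWithZero.isIdempotentElem_zero (S := S)
  obtain ⟨l, hl, hr, hd, hub⟩ := hpre
  refine ⟨orthogonalize l 0, orthogonalize_ne_nil hl 0, ?_, ?_,
    fun c hc => hub c (nle_of_forall_mem_orthogonalize h0 (InverseMonoidWithZero.zero_nle c) hc),
    pairwise_orthogonalize h0⟩
  all_goals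
    intro y hy
    obtain ⟨x, hx, g, hg, rfl⟩ := exists_eq_mul_idem_of_mem_orthogonalize h0 hy
  · exact InverseMonoidWithZero.nle_trans
      (InverseMonoidWithZero.mul_idem_mul_inv_nle x hg) (hr x hx)
  · exact InverseMonoidWithZero.nle_trans
      (InverseMonoidWithZero.mul_idem_inv_mul_nle x hg) (hd x hx)

/-- In a Tarski monoid, if `e ⪯ f` for non-zero idempotents
`e, f`, then there is a pencil `x₁, …, xₘ` from `e` to `f` whose domain
idempotents `d(xᵢ)` are pairwise orthogonal: `r(xᵢ) ≤ f` for all `i` and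
`e = ⋁ d(xᵢ)` is an orthogonal join. -/
theorem statement16 (S : Type u) [BooleanInverseMeetMonoid S] [Countable S]
    (hat : IdemAtomless S)
    (e f : S) (he : e * e = e) (hne : e ≠ 0) (hf : f * f = f) (hnf : f ≠ 0)
    (hpre : Preceq e f) :
    ∃ l : List S, l ≠ [] ∧ (∀ x ∈ l, nle (x * x⁻¹) f) ∧
      (∀ x ∈ l, nle (x⁻¹ * x) e) ∧
      (∀ c : S, (∀ x ∈ l, nle (x⁻¹ * x) c) → nle e c) ∧
      (l.map fun x => x⁻¹ * x).Pairwise (fun u v => u * v = 0) :=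
  statement16_general S e f hpre
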